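/- For λ > 1 let s*(λ) denote the unique zero of s ↦ F(s,λ) in the interval (0, √λ − 1). Then the function λ ↦ s*(λ) is strictly increasing on (1, ∞), lim_{λ→1⁺} s*(λ) = 0, and lim_{λ→∞} s*(λ) = 1. -/

import Mathlib

open Filter Topology

/-- `θ'(s) = ((1+s²−λ) + √((1+s²−λ)² − 4s²))/2`. -/
noncomputable def theta' (s lam : ℝ) : ℝ :=
  ((1 + s ^ 2 - lam) + Real.sqrt ((1 + s ^ 2 - lam) ^ 2 - 4 * s ^ 2)) / 2

/-- `δ(s) = s²λ/(λ−1)`. -/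
noncomputable def adelta (s lam : ℝ) : ℝ := s ^ 2 * lam / (lam - 1)

/-- `F(s,λ) = θ'(s) − δ(s) + s`. -/
noncomputable def Ffun (s lam : ℝ) : ℝ := theta' s lam - adelta s lam + s

/-! `θ'(s)` is a root of `x² - (1+s²-λ)x + s²`, so with `k = 1/(λ-1)` the equation `F(s,λ) = 0`
becomes the cubic equation `reducedCubic s k = 0`. This cubic is strictly decreasing in `s` for
`k ≥ 0` and in `k` for `0 < s ≤ 2`. It is negative at `s = 1`, so `s* < 1`; increasing `λ`
decreases `k`, which moves the root to the right; and the cubic gives `1 - s* ≤ 3k + k³`, so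
`s* → 1` as `k → 0`. At `1⁺`, the bounds `0 < s* < √λ - 1` squeeze `s*` to `0`. -/

noncomputable def reducedCubic (s k : ℝ) : ℝ :=
  1 - (3 * k + 1) * s + (2 * k ^ 2 + k) * s ^ 2 - (k ^ 3 + k ^ 2) * s ^ 3

lemma theta'_discr_nonneg {s lam : ℝ} (hs0 : 0 ≤ s) (hs : s < Real.sqrt lam - 1) :
    0 ≤ (1 + s ^ 2 - lam) ^ 2 - 4 * s ^ 2 := by
  have hlam : (s + 1) ^ 2 < lam := (Real.lt_sqrt (by linarith)).mp (by linarith)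
  nlinarith

lemma theta'_sq_sub_mul_add {s lam : ℝ} (hdisc : 0 ≤ (1 + s ^ 2 - lam) ^ 2 - 4 * s ^ 2) :
    theta' s lam ^ 2 - (1 + s ^ 2 - lam) * theta' s lam + s ^ 2 = 0 := by
  have hr := Real.sq_sqrt hdisc
  unfold theta'
  linear_combination hr / 4

lemma reducedCubic_eq_zero_of_Ffun_eq_zero {s lam : ℝ} (hlam : lam ≠ 1) (hs : s ≠ 0)
    (hdisc : 0 ≤ (1 + s ^ 2 - lam) ^ 2 - 4 * s ^ 2) (hF : Ffun s lam = 0) :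
    reducedCubic s (1 / (lam - 1)) = 0 := by
  have hθ : theta' s lam = s ^ 2 * lam / (lam - 1) - s := by
    unfold Ffun adelta at hF; linarith
  have hquad := theta'_sq_sub_mul_add hdisc
  rw [hθ] at hquad
  have hl : lam - 1 ≠ 0 := sub_ne_zero.mpr hlam
  unfold reducedCubic
  field_simp at hquad ⊢
  rw [mul_zero] at hquad
  linear_combination -(mul_eq_zero.mp hquad).resolve_left hs

/-- In `a = k s₁`, `b = k s₂` the difference quotient is
`(1 - (a+b) + a²+ab+b²) + k (3 - 2(a+b) + a²+ab+b²)`, a sum of two positive definite forms. -/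
lemma strictAnti_reducedCubic {k : ℝ} (hk : 0 ≤ k) : StrictAnti (fun s => reducedCubic s k) := by
  intro s₁ s₂ hs
  set C := (3 * k + 1) - (2 * k ^ 2 + k) * (s₁ + s₂) + (k ^ 3 + k ^ 2) * (s₁ ^ 2 + s₁ * s₂ + s₂ ^ 2)
  have hC : 0 < C := by
    nlinarith [sq_nonneg (k * s₁ - k * s₂), sq_nonneg (3 * (k * s₁ + k * s₂) - 2),
      mul_nonneg hk (sq_nonneg (k * s₁ - k * s₂)),
      mul_nonneg hk (sq_nonneg (3 * (k * s₁ + k * s₂) - 4))]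
  have hdiff : reducedCubic s₁ k - reducedCubic s₂ k = (s₂ - s₁) * C := by
    unfold reducedCubic C; ring
  nlinarith [mul_pos (sub_pos.mpr hs) hC]

lemma strictAnti_reducedCubic_right {s : ℝ} (hs0 : 0 < s) (hs2 : s ≤ 2) :
    StrictAnti (reducedCubic s) := by
  intro k₁ k₂ hk
  set B := 3 - s - 2 * (k₁ + k₂) * s + (k₁ + k₂) * s ^ 2 + (k₁ ^ 2 + k₁ * k₂ + k₂ ^ 2) * s ^ 2
  have hB : 0 < B := by
    nlinarith [sq_nonneg (3 * (k₁ + k₂) * s + 2 * (s - 2)), sq_nonneg (s * (k₁ - k₂))]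
  have hdiff : reducedCubic s k₂ - reducedCubic s k₁ = -((k₂ - k₁) * s * B) := by
    unfold reducedCubic B; ring
  nlinarith [mul_pos (mul_pos (sub_pos.mpr hk) hs0) hB]

lemma lt_one_of_reducedCubic_eq_zero {s k : ℝ} (hk : 0 < k) (h : reducedCubic s k = 0) :
    s < 1 := by
  refine (strictAnti_reducedCubic hk.le).lt_iff_gt.mp ?_
  have : reducedCubic 1 k = -k * (k ^ 2 - k + 2) := by unfold reducedCubic; ring
  simp only [h, this]
  nlinarith [sq_nonneg (k - 1)]

lemma one_sub_le_of_reducedCubic_eq_zero {s k : ℝ} (hk : 0 ≤ k) (hs0 : 0 ≤ s) (hs1 : s ≤ 1)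
    (h : reducedCubic s k = 0) : 1 - s ≤ 3 * k + k ^ 3 := by
  have : 1 - s = k * s * (3 - s) - k ^ 2 * s ^ 2 * (2 - s) + k ^ 3 * s ^ 3 := by
    unfold reducedCubic at h; linear_combination h
  have hs3 : s ^ 3 ≤ 1 := pow_le_one₀ hs0 hs1
  nlinarith [mul_nonneg hk (add_nonneg (sq_nonneg (s - 3 / 2)) (by norm_num : (0 : ℝ) ≤ 3 / 4)),
    mul_nonneg (mul_nonneg (sq_nonneg k) (sq_nonneg s)) (by linarith : (0 : ℝ) ≤ 2 - s),
    mul_nonneg (pow_nonneg hk 3) (sub_nonneg.mpr hs3)]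

/-- for `λ > 1` let `s*(λ)` denote the unique zero of `s ↦ F(s,λ)` in
`(0, √λ − 1)` (given here as a function `sstar` selecting such a zero for every `λ > 1`).
Then `λ ↦ s*(λ)` is strictly increasing on `(1, ∞)`, `s*(λ) → 0` as `λ → 1⁺`, and
`s*(λ) → 1` as `λ → ∞`. -/
theorem stmt18 (sstar : ℝ → ℝ)
    (hmem : ∀ lam : ℝ, 1 < lam → sstar lam ∈ Set.Ioo 0 (Real.sqrt lam - 1))
    (hzero : ∀ lam : ℝ, 1 < lam → Ffun (sstar lam) lam = 0) :
    StrictMonoOn sstar (Set.Ioi 1) ∧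
    Filter.Tendsto sstar (nhdsWithin 1 (Set.Ioi 1)) (nhds 0) ∧
    Filter.Tendsto sstar Filter.atTop (nhds 1) := by
  have hk : ∀ lam : ℝ, 1 < lam → 0 < 1 / (lam - 1) := fun lam hl =>
    one_div_pos.mpr (sub_pos.mpr hl)
  have hcubic : ∀ lam : ℝ, 1 < lam → reducedCubic (sstar lam) (1 / (lam - 1)) = 0 := fun lam hl =>
    reducedCubic_eq_zero_of_Ffun_eq_zero hl.ne' (hmem lam hl).1.ne'
      (theta'_discr_nonneg (hmem lam hl).1.le (hmem lam hl).2) (hzero lam hl)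
  have hlt1 : ∀ lam : ℝ, 1 < lam → sstar lam < 1 := fun lam hl =>
    lt_one_of_reducedCubic_eq_zero (hk lam hl) (hcubic lam hl)
  refine ⟨?_, ?_, ?_⟩
  · intro l₁ (hl₁ : 1 < l₁) l₂ (hl₂ : 1 < l₂) hl
    refine (strictAnti_reducedCubic (hk l₂ hl₂).le).lt_iff_gt.mp ?_
    calc reducedCubic (sstar l₂) (1 / (l₂ - 1)) = reducedCubic (sstar l₁) (1 / (l₁ - 1)) := by
          rw [hcubic l₁ hl₁, hcubic l₂ hl₂]
      _ < reducedCubic (sstar l₁) (1 / (l₂ - 1)) :=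
          strictAnti_reducedCubic_right (hmem l₁ hl₁).1 (by linarith [hlt1 l₁ hl₁])
            (one_div_lt_one_div_of_lt (by linarith) (by linarith))
  · have hsqrt : Tendsto (fun lam : ℝ => √lam - 1) (𝓝[>] 1) (𝓝 0) := by
      have h := (Real.continuous_sqrt.tendsto 1).sub_const 1
      rw [Real.sqrt_one, sub_self] at h
      exact h.mono_left nhdsWithin_le_nhds
    refine tendsto_of_tendsto_of_tendsto_of_le_of_le' tendsto_const_nhds hsqrt ?_ ?_ <;>
      filter_upwards [self_mem_nhdsWithin] with lam hl
    exacts [(hmem lam hl).1.le, (hmem lam hl).2.le]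
  · have hk0 : Tendsto (fun lam : ℝ => 1 / (lam - 1)) atTop (𝓝 0) :=
      tendsto_const_nhds.div_atTop (tendsto_atTop_add_const_right _ (-1) tendsto_id)
    have hlow : Tendsto (fun lam : ℝ => 1 - (3 * (1 / (lam - 1)) + (1 / (lam - 1)) ^ 3)) atTop
        (𝓝 1) := by
      simpa using ((hk0.const_mul 3).add (hk0.pow 3)).const_sub 1
    refine tendsto_of_tendsto_of_tendsto_of_le_of_le' hlow tendsto_const_nhds ?_ ?_ <;>
      filter_upwards [eventually_gt_atTop 1] with lam hl
    · linarith [one_sub_le_of_reducedCubic_eq_zero (hk lam hl).le (hmem lam hl).1.le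
        (hlt1 lam hl).le (hcubic lam hl)]
    · exact (hlt1 lam hl).le
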